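/- arXiv:1210.1734 — 2 statements merged into one kernel-verified Lean document; each statement's English description precedes it below -/
import Mathlib

section
/- Let R be a root system with positive system R^+, simple roots R^s, I ⊆ R^s, R_I the root subsystem generated by I with positive system R_I^+ = R_I ∩ R^+, W_I the subgroup of the Weyl group generated by {s_α : α ∈ I}, and w_I its longest element. Then ρ + w_I ρ = Σ_{β ∈ R^+ \ R_I^+} β, where ρ = (1/2) Σ_{β ∈ R^+} β. -/
/-- A (crystallographic, reduced) root system with a chosen positive system and base,
in a vector space over `ℚ`.  `coroot α` is the linear functional `⟨·, α^∨⟩`. -/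
structure RootSystemData (V : Type*) [AddCommGroup V] [Module ℚ V] where
  /-- the set of roots -/
  R : Finset V
  /-- the positive roots -/
  Rpos : Finset V
  /-- the simple roots -/
  Rs : Finset V
  /-- `coroot α v = ⟨v, α^∨⟩` -/
  coroot : V → V →ₗ[ℚ] ℚ
  Rpos_sub : Rpos ⊆ R
  Rs_sub : Rs ⊆ Rpos
  zero_not_mem : (0 : V) ∉ R
  neg_mem : ∀ α ∈ R, -α ∈ R
  pos_iff : ∀ α ∈ R, (α ∈ Rpos ↔ -α ∉ Rpos)
  coroot_self : ∀ α ∈ R, coroot α α = 2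
  coroot_neg : ∀ α ∈ R, coroot (-α) = -coroot α
  coroot_int : ∀ α ∈ R, ∀ β ∈ R, ∃ n : ℤ, coroot α β = (n : ℚ)
  reflect_mem : ∀ α ∈ R, ∀ β ∈ R, β - coroot α β • α ∈ R
  coroot_reflect : ∀ α ∈ R, ∀ β ∈ R, ∀ v : V,
    coroot (β - coroot α β • α) v = coroot β (v - coroot α v • α)
  simples_indep : LinearIndependent ℚ ((↑) : Rs → V)
  pos_span : ∀ β ∈ Rpos, ∃ c : V → ℕ, β = ∑ γ ∈ Rs, (c γ : ℚ) • γ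

namespace RootSystemData

variable {V : Type*} [AddCommGroup V] [Module ℚ V]

/-- The subgroup of `GL(V)` generated by the reflections `s_α` for roots `α ∈ A`.
Taking `A = Rs` gives the Weyl group `W`; taking `A = I ⊆ Rs` gives the
parabolic subgroup `W_I`. -/
def weyl (S : RootSystemData V) (A : Set V) : Subgroup (V ≃ₗ[ℚ] V) :=
  Subgroup.closure
    { g : V ≃ₗ[ℚ] V | ∃ α ∈ A ∩ (S.R : Set V), ∀ v : V, g v = v - S.coroot α v • α }

/-- `R_I^+`: the positive roots lying in the integral span of `I`. -/
noncomputable def posOf (S : RootSystemData V) (I : Finset V) : Finset V :=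
  letI := Classical.decPred fun β : V => β ∈ Submodule.span ℤ (I : Set V)
  S.Rpos.filter fun β => β ∈ Submodule.span ℤ (I : Set V)

end RootSystemData

/-! A positive root outside `R_I` has a positive coefficient at some simple root outside `I`.
Elements of `W_I` only move vectors by elements of `span I`, which does not change such
coefficients, so `w_I` permutes `R^+ \ R_I^+`, while `-w_I` permutes `R_I^+` by assumption.
Splitting `2ρ = Σ_{R^+} β` along `R^+ = (R^+ \ R_I^+) ∪ R_I^+` then gives
`2 (ρ + w_I ρ) = 2 Σ_{R^+ \ R_I^+} β`. -/

open Submodule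

@[to_additive]
theorem Finset.prod_comp_eq_of_mapsTo {α M : Type*} [CommMonoid M] {s : Finset α}
    {f : α → α} (hf : Function.Injective f) (hs : ∀ a ∈ s, f a ∈ s) (g : α → M) :
    ∏ a ∈ s, g (f a) = ∏ a ∈ s, g a :=
  Finset.prod_nbij f hs hf.injOn
    ((s.finite_toSet.injOn_iff_bijOn_of_mapsTo hs).mp hf.injOn).surjOn fun _ _ => rfl

namespace RootSystemData

variable {V : Type*} [AddCommGroup V] [Module ℚ V] (S : RootSystemData V)

lemma mem_posOf {I : Finset V} {β : V} :
    β ∈ S.posOf I ↔ β ∈ S.Rpos ∧ β ∈ span ℤ (I : Set V) := by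
  simp [posOf]

lemma inv_apply_of_reflection {α : V} (hα : α ∈ S.R) {g : V ≃ₗ[ℚ] V}
    (hg : ∀ v, g v = v - S.coroot α v • α) (v : V) : g⁻¹ v = v - S.coroot α v • α := by
  rw [LinearEquiv.coe_inv, LinearEquiv.symm_apply_eq, hg]
  simp only [map_sub, map_smul, smul_eq_mul, S.coroot_self α hα, mul_two, sub_smul, add_smul]
  abel

lemma mapsTo_and_sub_mem_span_of_reflection {A : Set V} {α : V} (hα : α ∈ A ∩ (S.R : Set V))
    {g : V ≃ₗ[ℚ] V} (hg : ∀ v, g v = v - S.coroot α v • α) :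
    (∀ β ∈ S.R, g β ∈ S.R) ∧ ∀ v, g v - v ∈ span ℚ A := by
  refine ⟨fun β hβ => hg β ▸ S.reflect_mem α hα.2 β hβ, fun v => ?_⟩
  rw [hg, sub_sub_cancel_left]
  exact Submodule.neg_mem _ (smul_mem _ _ (subset_span hα.1))

lemma mapsTo_and_sub_mem_span_of_mem_weyl {A : Set V} {w : V ≃ₗ[ℚ] V} (hw : w ∈ S.weyl A) :
    (∀ β ∈ S.R, w β ∈ S.R) ∧ ∀ v, w v - v ∈ span ℚ A := by
  induction hw using Subgroup.closure_induction'' with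
  | mem g hg =>
    obtain ⟨α, hα, hg⟩ := hg
    exact S.mapsTo_and_sub_mem_span_of_reflection hα hg
  | inv_mem g hg =>
    obtain ⟨α, hα, hg⟩ := hg
    exact S.mapsTo_and_sub_mem_span_of_reflection hα (S.inv_apply_of_reflection hα.2 hg)
  | one => exact ⟨fun β hβ => hβ, fun v => by simp⟩
  | mul g h _ _ hg hh =>
    refine ⟨fun β hβ => hg.1 _ (hh.1 β hβ), fun v => ?_⟩
    rw [LinearEquiv.mul_apply, ← sub_add_sub_cancel _ (h v)]
    exact add_mem (hg.2 _) (hh.2 v)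

lemma mem_span_int_of_add_mem_span {I : Finset V} (hI : I ⊆ S.Rs) {β : V} (hβ : β ∈ S.Rpos)
    (c : V → ℕ) (h : β + ∑ γ ∈ S.Rs, (c γ : ℚ) • γ ∈ span ℚ (I : Set V)) :
    β ∈ span ℤ (I : Set V) := by
  obtain ⟨d, rfl⟩ := S.pos_span β hβ
  obtain ⟨f, hfI, hf⟩ := mem_span_finset.mp h
  have hf_off : ∀ γ, γ ∉ I → f γ = 0 := fun γ hγ => Function.notMem_support.mp (hγ ∘ (hfI ·))
  have hcomb : ∑ γ ∈ S.Rs, ((d γ + c γ : ℚ) - f γ) • γ = 0 := by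
    rw [Finset.sum_subset hI (f := fun γ => f γ • γ) fun γ _ hγ => by
      rw [hf_off γ hγ, zero_smul]] at hf
    simp only [sub_smul, add_smul, Finset.sum_sub_distrib, Finset.sum_add_distrib, ← hf, sub_self]
  have hd_off : ∀ γ ∈ S.Rs, γ ∉ I → d γ = 0 := by
    intro γ hγ hγI
    have := (linearIndepOn_finset_iff (v := id)).mp S.simples_indep _ hcomb γ hγ
    rw [hf_off γ hγI, sub_zero] at this
    exact_mod_cast (add_eq_zero_iff_of_nonneg (by positivity) (by positivity)).mp this |>.1
  rw [← Finset.sum_subset hI fun γ hγ hγI => by rw [hd_off γ hγ hγI, Nat.cast_zero, zero_smul]]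
  refine sum_mem fun γ hγ => ?_
  rw [Nat.cast_smul_eq_nsmul]
  exact nsmul_mem (subset_span hγ) _

lemma apply_mem_sdiff_posOf [DecidableEq V] {I : Finset V} (hI : I ⊆ S.Rs) {w : V ≃ₗ[ℚ] V}
    (hw : w ∈ S.weyl (I : Set V)) {β : V} (hβ : β ∈ S.Rpos \ S.posOf I) :
    w β ∈ S.Rpos \ S.posOf I := by
  simp only [Finset.mem_sdiff, mem_posOf, not_and] at hβ ⊢
  obtain ⟨hβpos, hβI⟩ := hβ
  replace hβI := hβI hβpos
  obtain ⟨hR, hspan⟩ := S.mapsTo_and_sub_mem_span_of_mem_weyl hw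
  have hβQ : β ∉ span ℚ (I : Set V) := fun h =>
    hβI (S.mem_span_int_of_add_mem_span hI hβpos 0 (by simpa using h))
  have hwpos : w β ∈ S.Rpos := by
    rw [S.pos_iff _ (hR β (S.Rpos_sub hβpos))]
    intro hneg
    obtain ⟨c, hc⟩ := S.pos_span _ hneg
    refine hβI (S.mem_span_int_of_add_mem_span hI hβpos c ?_)
    rw [← hc, ← sub_eq_add_neg, ← neg_sub]
    exact Submodule.neg_mem _ (hspan β)
  refine ⟨hwpos, fun _ hwI => hβQ ?_⟩
  rw [← sub_sub_cancel (w β) β]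
  exact sub_mem (span_subset_span ℤ ℚ _ hwI) (hspan β)

end RootSystemData

open RootSystemData in
/-- `ρ + w_I ρ = Σ_{β ∈ R^+ \ R_I^+} β`, where `w_I` is the longest element
of the parabolic subgroup `W_I` (characterized by `w_I (R_I^+) = −R_I^+`). -/
theorem statement0 {V : Type*} [AddCommGroup V] [Module ℚ V] [DecidableEq V]
    (S : RootSystemData V) (I : Finset V) (hI : I ⊆ S.Rs)
    (ρ : V) (hρ : (2 : ℚ) • ρ = ∑ β ∈ S.Rpos, β)
    (wI : V ≃ₗ[ℚ] V) (hwI : wI ∈ S.weyl (I : Set V))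
    (hwIlong : ∀ β ∈ S.posOf I, -(wI β) ∈ S.posOf I) :
    ρ + wI ρ = ∑ β ∈ S.Rpos \ S.posOf I, β := by
  set A := S.Rpos \ S.posOf I
  set B := S.posOf I
  have hsumA : ∑ β ∈ A, wI β = ∑ β ∈ A, β :=
    Finset.sum_comp_eq_of_mapsTo wI.injective (fun β hβ => S.apply_mem_sdiff_posOf hI hwI hβ) id
  have hsumB : ∑ β ∈ B, wI β = -∑ β ∈ B, β := by
    have hneg : ∑ β ∈ B, -wI β = ∑ β ∈ B, β :=
      Finset.sum_comp_eq_of_mapsTo (neg_injective.comp wI.injective) hwIlong id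
    rw [← hneg, Finset.sum_neg_distrib, neg_neg]
  have hsplit (f : V → V) : ∑ β ∈ S.Rpos, f β = ∑ β ∈ A, f β + ∑ β ∈ B, f β :=
    (Finset.sum_sdiff fun β hβ => (S.mem_posOf.mp hβ).1).symm
  refine smul_right_injective V (two_ne_zero (α := ℚ)) ?_
  calc (2 : ℚ) • (ρ + wI ρ) = ∑ β ∈ S.Rpos, β + wI (∑ β ∈ S.Rpos, β) := by
        rw [smul_add, ← map_smul, hρ]
    _ = (∑ β ∈ A, β + ∑ β ∈ B, β) + (∑ β ∈ A, wI β + ∑ β ∈ B, wI β) := by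
        rw [map_sum, hsplit, hsplit]
    _ = (2 : ℚ) • ∑ β ∈ A, β := by
        rw [hsumA, hsumB, two_smul]; abel
end

section
/- For a module M of finite length over a ring, the least n with soc^n M = M equals the least n with rad^n M = 0 (this common value is the Loewy length ℓℓ(M)). Here soc^1 M = soc M is the sum of all simple submodules, soc^{i+1} M is the preimage in M of soc(M/soc^i M), rad^1 M = rad M is the intersection of all maximal submodules, and rad^{i+1} M = rad(rad^i M). -/
/-!
For Artinian `M` and submodules `N, P`, both `radOf N ≤ P` and `N ≤ socStep P` say that the image
of `N` in `M ⧸ P` is semisimple: an image of an Artinian module `N` is semisimple exactly when it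
kills `rad N`, because `N ⧸ rad N` is semisimple and semisimple modules have zero radical. Thus
`radOf ⊣ socStep` is a Galois connection, and its `n`-th iterate gives
`rad^n M = 0 ↔ soc^n M = M`.
-/

section LoewySeries

variable (R : Type*) [Ring R] (M : Type*) [AddCommGroup M] [Module R M]

/-- The socle of a module: the sum of all its simple submodules. -/
noncomputable def socM : Submodule R M :=
  sSup {m : Submodule R M | IsSimpleModule R ↥m}

/-- The radical of a module: the intersection of all its maximal (proper) submodules. -/
noncomputable def radM : Submodule R M :=
  sInf {m : Submodule R M | IsCoatom m}

variable {R M}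

/-- Given `N ≤ M`, the preimage in `M` of the socle of `M/N`. -/
noncomputable def socStep (N : Submodule R M) : Submodule R M :=
  Submodule.comap N.mkQ (socM R (M ⧸ N))

/-- Given `N ≤ M`, the radical of `N` viewed as a submodule of `M`. -/
noncomputable def radOf (N : Submodule R M) : Submodule R M :=
  (radM R ↥N).map N.subtype

variable (R M)

/-- The socle series: `soc⁰ M = 0`, `soc^{i+1} M` is the preimage in `M` of
`soc (M / soc^i M)`. -/
noncomputable def socSeries : ℕ → Submodule R M
  | 0 => ⊥
  | n + 1 => socStep (socSeries n)

/-- The radical series: `rad⁰ M = M`, `rad^{i+1} M = rad (rad^i M)`. -/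
noncomputable def radSeries : ℕ → Submodule R M
  | 0 => ⊤
  | n + 1 => radOf (radSeries n)

/-- The Loewy length: the least `n` with `soc^n M = M`. -/
noncomputable def loewyLength : ℕ := sInf {n | socSeries R M n = ⊤}

end LoewySeries

theorem GaloisConnection.iterate {α : Type*} [Preorder α] {l u : α → α}
    (gc : GaloisConnection l u) (n : ℕ) : GaloisConnection l^[n] u^[n] := by
  induction n with
  | zero => exact GaloisConnection.id
  | succ n ih => rw [Function.iterate_succ, Function.iterate_succ']; exact gc.compose ih

section LoewySeries

variable {R : Type*} [Ring R] {M : Type*} [AddCommGroup M] [Module R M]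

theorem radM_eq_jacobson : radM R M = Module.jacobson R M := rfl

theorem isSemisimpleModule_socM : IsSemisimpleModule R (socM R M) := by
  rw [socM, sSup_eq_iSup]
  exact isSemisimpleModule_biSup_of_isSemisimpleModule_submodule (p := fun m ↦ m) fun m hm ↦
    have : IsSimpleModule R m := hm
    inferInstance

theorem le_socM_of_isSemisimpleModule (N : Submodule R M) [IsSemisimpleModule R N] :
    N ≤ socM R M := by
  rw [← N.range_subtype, LinearMap.range_eq_map, ← IsSemisimpleModule.sSup_simples_eq_top R N,
    sSup_eq_iSup, Submodule.map_iSup]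
  refine iSup_le fun m ↦ ?_
  rw [Submodule.map_iSup]
  refine iSup_le fun hm ↦ le_sSup ?_
  have : IsSimpleModule R m := hm
  exact .congr (m.equivMapOfInjective N.subtype N.injective_subtype).symm

theorem le_socM_iff_isSemisimpleModule {N : Submodule R M} :
    N ≤ socM R M ↔ IsSemisimpleModule R N := by
  refine ⟨fun h ↦ ?_, fun _ ↦ le_socM_of_isSemisimpleModule N⟩
  have := isSemisimpleModule_socM (R := R) (M := M)
  exact .congr (Submodule.comapSubtypeEquivOfLe h).symm

variable {N : Type*} [AddCommGroup N] [Module R N]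

theorem jacobson_le_ker_of_isSemisimpleModule_range (f : N →ₗ[R] M)
    [IsSemisimpleModule R (LinearMap.range f)] : Module.jacobson R N ≤ LinearMap.ker f := by
  rw [← f.ker_rangeRestrict, LinearMap.ker, ← Submodule.map_le_iff_le_comap,
    ← IsSemisimpleModule.jacobson_eq_bot R (LinearMap.range f)]
  exact Module.map_jacobson_le _

theorem isSemisimpleModule_range_iff_jacobson_le_ker [IsArtinian R N] (f : N →ₗ[R] M) :
    IsSemisimpleModule R (LinearMap.range f) ↔ Module.jacobson R N ≤ LinearMap.ker f := by
  refine ⟨fun _ ↦ jacobson_le_ker_of_isSemisimpleModule_range f, fun h ↦ ?_⟩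
  have : IsSemisimpleModule R (N ⧸ Module.jacobson R N) :=
    (IsArtinian.isSemisimpleModule_iff_jacobson R _).mpr (Module.jacobson_quotient_jacobson R N)
  let g := (Module.jacobson R N).liftQ f.rangeRestrict (f.ker_rangeRestrict ▸ h)
  exact .of_surjective g <| LinearMap.range_eq_top.mp <| by
    rw [Submodule.range_liftQ, LinearMap.range_rangeRestrict]

theorem radOf_le_iff_le_socStep [IsArtinian R M] {N P : Submodule R M} :
    radOf N ≤ P ↔ N ≤ socStep P := by
  let f := P.mkQ ∘ₗ N.subtype
  calc radOf N ≤ P ↔ Module.jacobson R N ≤ LinearMap.ker f := by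
        rw [radOf, radM_eq_jacobson, Submodule.map_le_iff_le_comap, LinearMap.ker_comp,
          Submodule.ker_mkQ]
    _ ↔ IsSemisimpleModule R (LinearMap.range f) :=
        (isSemisimpleModule_range_iff_jacobson_le_ker f).symm
    _ ↔ LinearMap.range f ≤ socM R (M ⧸ P) := le_socM_iff_isSemisimpleModule.symm
    _ ↔ N ≤ socStep P := by
        rw [LinearMap.range_comp, Submodule.range_subtype, socStep, Submodule.map_le_iff_le_comap]

theorem gc_radOf_socStep [IsArtinian R M] :
    GaloisConnection (radOf : Submodule R M → Submodule R M) socStep :=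
  fun _ _ ↦ radOf_le_iff_le_socStep

theorem radSeries_eq_iterate (n : ℕ) : radSeries R M n = radOf^[n] ⊤ := by
  induction n with
  | zero => rfl
  | succ n ih => rw [Function.iterate_succ_apply', ← ih, radSeries]

theorem socSeries_eq_iterate (n : ℕ) : socSeries R M n = socStep^[n] ⊥ := by
  induction n with
  | zero => rfl
  | succ n ih => rw [Function.iterate_succ_apply', ← ih, socSeries]

theorem radSeries_eq_bot_iff_socSeries_eq_top [IsArtinian R M] (n : ℕ) :
    radSeries R M n = ⊥ ↔ socSeries R M n = ⊤ := by
  rw [radSeries_eq_iterate, socSeries_eq_iterate, ← le_bot_iff, ← top_le_iff]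
  exact gc_radOf_socStep.iterate n ⊤ ⊥

end LoewySeries

/-- for a module `M` of finite length, the least `n` with `soc^n M = M`
equals the least `n` with `rad^n M = 0` (the Loewy length of `M`). -/
theorem statement7 (R : Type*) [Ring R] (M : Type*) [AddCommGroup M] [Module R M]
    (h : IsFiniteLength R M) :
    sInf {n | socSeries R M n = ⊤} = sInf {n | radSeries R M n = ⊥} := by
  have : IsArtinian R M := (isFiniteLength_iff_isNoetherian_isArtinian.mp h).2
  simp_rw [radSeries_eq_bot_iff_socSeries_eq_top]
end
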